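/- Let α, β > 0, (v, θ, ω) ∈ ℝ³, ω_d ∈ ℝ, s₁ ∈ {−1,1}, s₃ = −s₁, and let s₂ ∈ {−1,1} satisfy s₂·v = −|v|. Suppose Δ := 2ω² + 2ω_d² + α²v²/β² − 4s₁αθ ≥ 0, and let ε ∈ {−1,1}. Define t₁ = (−(2ω + s₁α|v|/β) + ε√Δ)/(2s₁α), t₃ = (−(2ω_d + s₁α|v|/β) + ε√Δ)/(2s₁α), and t₂ = |v|/β. Then the general three-phase final state from (v, θ, ω) with durations t₁, t₂, t₃ and signs s₁, s₂, s₃ equals (0, 0, ω_d). -/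

import Mathlib

/-!
With `a = s₁ α`, let `ω₁ = ω + a t₁` be the angular velocity during the linear phase. Since each
phase of constant angular acceleration `±a` changes `ω²` by `±2a` times the angle swept, the final
angle vanishes iff `ω₁` is a root of `2 ω₁² + 2 a t₂ ω₁ + 2 a θ - ω² - ω_d² = 0`, whose roots are
`(-a t₂ ± √Δ) / 2`. The choice of `t₁` and `t₃` makes `ω₁` such a root and `ω₁ - a t₃ = ω_d`,
while `t₂ = |v| / β` with `s₂ v = -|v|` brings the linear velocity to rest.
-/

/-- The general three-phase final state `(v_f, θ_f, ω_f)`: angular acceleration `s₁ * α`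
for time `t₁`, linear acceleration `s₂ * β` for time `t₂`, angular acceleration
`s₃ * α` for time `t₃`. -/
noncomputable def threePhaseFinal (α β v θ ω t₁ t₂ t₃ s₁ s₂ s₃ : ℝ) : ℝ × ℝ × ℝ :=
  (v + s₂ * β * t₂,
   θ + ω * t₁ + s₁ * α * t₁ ^ 2 / 2 + (ω + s₁ * α * t₁) * (t₂ + t₃) + s₃ * α * t₃ ^ 2 / 2,
   ω + s₁ * α * t₁ + s₃ * α * t₃)

open Real

lemma mul_abs_eq_neg_of_mul_eq_neg_abs {s v : ℝ} (h : s * v = -|v|) : s * |v| = -v := by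
  rcases le_or_gt 0 v with hv | hv
  · rw [abs_of_nonneg hv] at h ⊢
    exact h
  · rw [abs_of_neg hv] at h ⊢
    linarith

lemma add_mul_mul_abs_div_eq_zero {s β v : ℝ} (hβ : β ≠ 0) (h : s * v = -|v|) :
    v + s * β * (|v| / β) = 0 := by
  field_simp
  linear_combination mul_abs_eq_neg_of_mul_eq_neg_abs h

lemma two_mul_angle_swept_eq (a ω t₁ t₂ t₃ : ℝ) :
    2 * a * (ω * t₁ + a * t₁ ^ 2 / 2 + (ω + a * t₁) * (t₂ + t₃) - a * t₃ ^ 2 / 2) =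
      2 * (ω + a * t₁) ^ 2 + 2 * (a * t₂) * (ω + a * t₁) - ω ^ 2 - (ω + a * t₁ - a * t₃) ^ 2 := by
  ring

lemma two_mul_sq_add_two_mul_of_eq_half_neg_add {c e x : ℝ} (hx : x = (-c + e) / 2) :
    2 * x ^ 2 + 2 * c * x = (e ^ 2 - c ^ 2) / 2 := by
  subst hx
  ring

lemma mul_sqrt_sq_of_sq_eq_one {ε D : ℝ} (hε : ε ^ 2 = 1) (hD : 0 ≤ D) : (ε * √D) ^ 2 = D := by
  rw [mul_pow, hε, sq_sqrt hD, one_mul]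

theorem stmt13_general (α β v θ ω ωd : ℝ) (hα : 0 < α) (hβ : 0 < β)
    (s₁ s₂ s₃ : ℝ) (hs₁ : s₁ = -1 ∨ s₁ = 1) (hs₃ : s₃ = -s₁)
    (hs₂v : s₂ * v = -|v|)
    (Δ : ℝ) (hΔdef : Δ = 2 * ω ^ 2 + 2 * ωd ^ 2 + α ^ 2 * v ^ 2 / β ^ 2 - 4 * s₁ * α * θ)
    (hΔ : 0 ≤ Δ)
    (ε : ℝ) (hε : ε = -1 ∨ ε = 1)
    (t₁ t₂ t₃ : ℝ)
    (ht₁ : t₁ = (-(2 * ω + s₁ * α * |v| / β) + ε * Real.sqrt Δ) / (2 * s₁ * α))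
    (ht₃ : t₃ = (-(2 * ωd + s₁ * α * |v| / β) + ε * Real.sqrt Δ) / (2 * s₁ * α))
    (ht₂ : t₂ = |v| / β) :
    threePhaseFinal α β v θ ω t₁ t₂ t₃ s₁ s₂ s₃ = (0, 0, ωd) := by
  have hs₁sq : s₁ ^ 2 = 1 := sq_eq_one_iff.mpr hs₁.symm
  have hs₁ne : s₁ ≠ 0 := by rintro rfl; norm_num at hs₁sq
  have hε_sq : ε ^ 2 = 1 := sq_eq_one_iff.mpr hε.symm
  have hΔ' : (ε * √Δ) ^ 2 = (s₁ * α * t₂) ^ 2 + 2 * ω ^ 2 + 2 * ωd ^ 2 - 4 * (s₁ * α) * θ := by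
    rw [mul_sqrt_sq_of_sq_eq_one hε_sq hΔ, hΔdef, ht₂, mul_pow, mul_pow, div_pow, sq_abs, hs₁sq]
    ring
  have hω₁ : ω + s₁ * α * t₁ = (-(s₁ * α * t₂) + ε * √Δ) / 2 := by
    rw [ht₁, ht₂]
    field_simp
    ring
  have hωd : ω + s₁ * α * t₁ - s₁ * α * t₃ = ωd := by
    rw [ht₁, ht₃]
    field_simp
    ring
  subst hs₃
  simp only [threePhaseFinal, Prod.mk.injEq]
  refine ⟨ht₂ ▸ add_mul_mul_abs_div_eq_zero hβ.ne' hs₂v, ?_, by linear_combination hωd⟩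
  apply mul_left_cancel₀ (mul_ne_zero (mul_ne_zero two_ne_zero hs₁ne) hα.ne')
  linear_combination two_mul_angle_swept_eq (s₁ * α) ω t₁ t₂ t₃
    + two_mul_sq_add_two_mul_of_eq_half_neg_add hω₁ + hΔ' / 2
    - (ω + s₁ * α * t₁ - s₁ * α * t₃ + ωd) * hωd

theorem stmt13 (α β v θ ω ωd : ℝ) (hα : 0 < α) (hβ : 0 < β)
    (s₁ s₂ s₃ : ℝ) (hs₁ : s₁ = -1 ∨ s₁ = 1) (hs₃ : s₃ = -s₁)
    (hs₂ : s₂ = -1 ∨ s₂ = 1) (hs₂v : s₂ * v = -|v|)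
    (Δ : ℝ) (hΔdef : Δ = 2 * ω ^ 2 + 2 * ωd ^ 2 + α ^ 2 * v ^ 2 / β ^ 2 - 4 * s₁ * α * θ)
    (hΔ : 0 ≤ Δ)
    (ε : ℝ) (hε : ε = -1 ∨ ε = 1)
    (t₁ t₂ t₃ : ℝ)
    (ht₁ : t₁ = (-(2 * ω + s₁ * α * |v| / β) + ε * Real.sqrt Δ) / (2 * s₁ * α))
    (ht₃ : t₃ = (-(2 * ωd + s₁ * α * |v| / β) + ε * Real.sqrt Δ) / (2 * s₁ * α))
    (ht₂ : t₂ = |v| / β) :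
    threePhaseFinal α β v θ ω t₁ t₂ t₃ s₁ s₂ s₃ = (0, 0, ωd) :=
  stmt13_general α β v θ ω ωd hα hβ s₁ s₂ s₃ hs₁ hs₃ hs₂v Δ hΔdef hΔ ε hε t₁ t₂ t₃ ht₁ ht₃ ht₂
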